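/- arXiv:1003.3683 — 10 statements merged into one kernel-verified Lean document; each statement's English description precedes it below -/
import Mathlib

section
/- Let G be a simple graph on the vertex set Fin N such that every vertex has at most one neighbor with a smaller label. Then every connected component of G contains exactly one vertex that has no neighbor with a smaller label (the root of that component). -/
/-!
Descending from a vertex to a smaller neighbour, as long as there is one, terminates (labels are
well-ordered) in a root reachable from the start. When every vertex has at most one smaller
neighbour the descent is deterministic, so two adjacent vertices, the larger of which steps to the
other, end in the same root; hence the root reached is constant on connected components, and a
descent from a root stays put.
-/

namespace SimpleGraph

variable {V : Type*} [LinearOrder V] [WellFoundedLT V] (G : SimpleGraph V)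

def IsRoot (r : V) : Prop := ∀ w, G.Adj r w → ¬ w < r

open Classical in
/-- Step to a (chosen) smaller neighbour until there is none. -/
noncomputable def root : V → V :=
  WellFoundedLT.fix fun v descend =>
    if h : ∃ w, G.Adj v w ∧ w < v then descend h.choose h.choose_spec.2 else v

open Classical in
theorem root_def (v : V) :
    G.root v = if h : ∃ w, G.Adj v w ∧ w < v then G.root h.choose else v :=
  WellFoundedLT.fix_eq _ v

variable {G}

theorem isRoot_root (v : V) : G.IsRoot (G.root v) := by
  induction v using WellFoundedLT.induction with
  | _ v ih =>
    rw [root_def]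
    split_ifs with h
    · exact ih _ h.choose_spec.2
    · exact fun w hvw hwv => h ⟨w, hvw, hwv⟩

theorem reachable_root (v : V) : G.Reachable v (G.root v) := by
  induction v using WellFoundedLT.induction with
  | _ v ih =>
    rw [root_def]
    split_ifs with h
    · exact h.choose_spec.1.reachable.trans (ih _ h.choose_spec.2)
    · rfl

theorem IsRoot.root_eq_self {r : V} (hr : G.IsRoot r) : G.root r = r := by
  rw [root_def, dif_neg]
  rintro ⟨w, hrw, hwr⟩
  exact hr w hrw hwr

section UniqueSmallerNeighbor

variable (h : ∀ v w w' : V, G.Adj v w → G.Adj v w' → w < v → w' < v → w = w')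
include h

theorem root_eq_of_adj_of_lt {u w : V} (huw : G.Adj u w) (hwu : w < u) :
    G.root u = G.root w := by
  have hex : ∃ x, G.Adj u x ∧ x < u := ⟨w, huw, hwu⟩
  rw [root_def, dif_pos hex, h u _ w hex.choose_spec.1 huw hex.choose_spec.2 hwu]

theorem root_eq_of_adj {u w : V} (huw : G.Adj u w) : G.root u = G.root w := by
  rcases lt_or_gt_of_ne huw.ne with hlt | hgt
  · exact (root_eq_of_adj_of_lt h huw.symm hlt).symm
  · exact root_eq_of_adj_of_lt h huw hgt

theorem root_eq_of_reachable {u w : V} (huw : G.Reachable u w) : G.root u = G.root w := by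
  obtain ⟨p⟩ := huw
  induction p with
  | nil => rfl
  | cons hadj _ ih => exact (root_eq_of_adj h hadj).trans ih

theorem existsUnique_reachable_isRoot (v : V) : ∃! r, G.Reachable v r ∧ G.IsRoot r :=
  ⟨G.root v, ⟨reachable_root v, isRoot_root v⟩, fun _ ⟨hvr, hr⟩ =>
    hr.root_eq_self.symm.trans (root_eq_of_reachable h hvr).symm⟩

end UniqueSmallerNeighbor

end SimpleGraph

/-- If every vertex of a simple graph on `Fin N` has at most one
neighbor with a smaller label, then every connected component contains exactly one
vertex having no neighbor with a smaller label (the root of that component). -/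
theorem unique_root_of_at_most_one_smaller_neighbor (N : ℕ) (G : SimpleGraph (Fin N))
    (h : ∀ v w w' : Fin N, G.Adj v w → G.Adj v w' → w < v → w' < v → w = w') :
    ∀ v : Fin N, ∃! r : Fin N, G.Reachable v r ∧ ∀ w : Fin N, G.Adj r w → ¬ w < r :=
  SimpleGraph.existsUnique_reachable_isRoot h
end

section
/- Let N and d be positive natural numbers and let G be a simple graph on the vertex set Fin N in which every vertex has degree at most d. Then the edge set of G can be partitioned into d classes such that each class, viewed as a subgraph of G on the same vertex set, is a forest (contains no cycle). Equivalently, there is an edge coloring of G with d colors in which every color class is acyclic. -/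
/-!
Order the vertices. Each vertex `v` has at most `d` neighbours below it, so it can give the
edges to its lower neighbours pairwise distinct colours. Then in every colour class each vertex
has at most one lower neighbour, and such a graph is acyclic: at the largest vertex of a cycle
both cycle neighbours would be lower neighbours, and they are distinct.
-/

namespace SimpleGraph

variable {V : Type*} [LinearOrder V]

theorem isAcyclic_of_lowerNeighbors_subsingleton {H : SimpleGraph V}
    (h : ∀ v, {u | H.Adj v u ∧ u < v}.Subsingleton) : H.IsAcyclic := by
  classical
  intro v p hp
  set m := p.support.toFinset.max' ⟨v, by simp⟩
  have hm : m ∈ p.support := List.mem_toFinset.mp (Finset.max'_mem _ _)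
  set q := p.rotate m hm
  have hq : q.IsCycle := hp.rotate hm
  have lt_of_mem : ∀ x, H.Adj m x → x ∈ q.support → x < m := fun x hx hxq =>
    (Finset.le_max' _ x <| List.mem_toFinset.mpr <| by
      rwa [← Walk.mem_verts_toSubgraph, Walk.toSubgraph_rotate, Walk.mem_verts_toSubgraph]
        at hxq).lt_of_ne hx.ne'
  have hsnd := q.adj_snd hq.not_nil
  have hpen := (q.adj_penultimate hq.not_nil).symm
  exact hq.snd_ne_penultimate <| h m
    ⟨hsnd, lt_of_mem _ hsnd (q.getVert_mem_support 1)⟩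
    ⟨hpen, lt_of_mem _ hpen (q.getVert_mem_support _)⟩

theorem exists_coloring_injOn_lowerNeighbors (G : SimpleGraph V) {d : ℕ} (hd : 0 < d)
    (hlow : ∀ v, {u | G.Adj v u ∧ u < v}.encard ≤ d) :
    ∃ c : Sym2 V → Fin d, ∀ v, Set.InjOn (fun u => c s(v, u)) {u | G.Adj v u ∧ u < v} := by
  have : Nonempty (Fin d) := ⟨⟨0, hd⟩⟩
  have hinj : ∀ v, ∃ f : V → Fin d, Set.InjOn f {u | G.Adj v u ∧ u < v} := fun v => by
    obtain ⟨f, -, hf⟩ := (Set.finite_of_encard_le_coe (hlow v)).exists_injOn_of_encard_le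
      (t := (Set.univ : Set (Fin d))) (by simpa using hlow v)
    exact ⟨f, hf⟩
  choose f hf using hinj
  refine ⟨Sym2.lift ⟨fun x y => f (max x y) (min x y), fun x y => by simp only [max_comm, min_comm]⟩,
    fun v a ha b hb hab => hf v ha hb ?_⟩
  simpa [max_eq_left ha.2.le, min_eq_right ha.2.le, max_eq_left hb.2.le,
    min_eq_right hb.2.le] using hab

end SimpleGraph

open SimpleGraph

theorem forest_decomposition_general (N d : ℕ) (hd : 0 < d)
    (G : SimpleGraph (Fin N)) (hdeg : ∀ v : Fin N, (G.neighborSet v).ncard ≤ d) :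
    ∃ c : Sym2 (Fin N) → Fin d,
      ∀ i : Fin d,
        (SimpleGraph.fromRel (fun x y => G.Adj x y ∧ c s(x, y) = i)).IsAcyclic := by
  have hlow : ∀ v, {u | G.Adj v u ∧ u < v}.encard ≤ d := fun v =>
    calc {u | G.Adj v u ∧ u < v}.encard ≤ (G.neighborSet v).encard :=
          Set.encard_le_encard fun _ hu => hu.1
      _ = (G.neighborSet v).ncard := (Set.toFinite _).cast_ncard_eq.symm
      _ ≤ d := by exact_mod_cast hdeg v
  obtain ⟨c, hc⟩ := G.exists_coloring_injOn_lowerNeighbors hd hlow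
  refine ⟨c, fun i => isAcyclic_of_lowerNeighbors_subsingleton fun v a ha b hb => ?_⟩
  have colorClass_adj : ∀ {u}, (fromRel fun x y => G.Adj x y ∧ c s(x, y) = i).Adj v u →
      G.Adj v u ∧ c s(v, u) = i := by
    intro u hu
    rcases (fromRel_adj _ _ _).mp hu with ⟨-, h | ⟨h, hc⟩⟩
    exacts [h, ⟨h.symm, Sym2.eq_swap ▸ hc⟩]
  obtain ⟨haG, hai⟩ := colorClass_adj ha.1
  obtain ⟨hbG, hbi⟩ := colorClass_adj hb.1
  exact hc v ⟨haG, ha.2⟩ ⟨hbG, hb.2⟩ (hai.trans hbi.symm)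

/-- **Forest decomposition.** The edges of a simple graph on `Fin N` with
maximum degree at most `d` can be colored with `d` colors so that every color class is
a forest (acyclic subgraph). -/
theorem forest_decomposition (N d : ℕ) (hN : 0 < N) (hd : 0 < d)
    (G : SimpleGraph (Fin N)) (hdeg : ∀ v : Fin N, (G.neighborSet v).ncard ≤ d) :
    ∃ c : Sym2 (Fin N) → Fin d,
      ∀ i : Fin d,
        (SimpleGraph.fromRel (fun x y => G.Adj x y ∧ c s(x, y) = i)).IsAcyclic :=
  forest_decomposition_general N d hd G hdeg
end

section
/- Let V be a finite type and let p : V → V be a parent function defining a rooted forest, i.e., for every x ∈ V there exists n such that p^(n+1)(x) = p^n(x) (vertices with p(x) = x are called roots). Let c : V → ℕ be a proper coloring, meaning c(x) ≠ c(p(x)) whenever p(x) ≠ x. Define the updated coloring c' : V → ℕ as follows: if p(x) ≠ x, let k(x) be the least index k such that the k-th binary digit of c(x) differs from the k-th binary digit of c(p(x)) (which exists since c(x) ≠ c(p(x))), and set c'(x) = 2·k(x) + b(x) where b(x) is the k(x)-th binary digit of c(x); if p(x) = x, set c'(x) equal to the 0-th binary digit of c(x). Then: (i) c' is again a proper coloring,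 i.e., c'(x) ≠ c'(p(x)) whenever p(x) ≠ x; and (ii) if L ≥ 1 and c(x) < 2^L for all x, then c'(x) < 2·L for all x. -/
/-! The new colour `2 k + b` records a bit position `k` together with the bit `b` of the child
there. If a child and its parent received the same new colour, they would have chosen the same
position `k`, and the child's bit at `k` would equal the parent's bit at `k`; but `k` was chosen
as a position where the child and the parent differ. A root behaves like a vertex with `k = 0`.
Positions where two numbers below `2 ^ L` differ are below `L`, which gives the bound. -/

lemma Nat.two_mul_add_ite_testBit_ne {a b i : ℕ} (h : a.testBit i ≠ b.testBit i) (j : ℕ) :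
    2 * i + (if a.testBit i then 1 else 0) ≠ 2 * j + (if b.testBit j then 1 else 0) := by
  intro heq
  obtain rfl : i = j := by split at heq <;> split at heq <;> omega
  split at heq <;> split at heq <;> simp_all

lemma Nat.lt_of_testBit_ne_of_lt_two_pow {a b k L : ℕ} (ha : a < 2 ^ L) (hb : b < 2 ^ L)
    (h : a.testBit k ≠ b.testBit k) : k < L := by
  by_contra! hLk
  have hpow : 2 ^ L ≤ 2 ^ k := Nat.pow_le_pow_right two_pos hLk
  exact h <| (Nat.testBit_eq_false_of_lt (ha.trans_le hpow)).trans
    (Nat.testBit_eq_false_of_lt (hb.trans_le hpow)).symm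

theorem cole_vishkin_round_general {V : Type*} (p : V → V)
    (c : V → ℕ)
    (k : V → ℕ)
    (hk : ∀ x : V, p x ≠ x →
      (c x).testBit (k x) ≠ (c (p x)).testBit (k x) ∧
      ∀ j : ℕ, j < k x → (c x).testBit j = (c (p x)).testBit j)
    (c' : V → ℕ)
    (hc'nonroot : ∀ x : V, p x ≠ x →
      c' x = 2 * k x + (if (c x).testBit (k x) then 1 else 0))
    (hc'root : ∀ x : V, p x = x → c' x = (if (c x).testBit 0 then 1 else 0)) :
    (∀ x : V, p x ≠ x → c' x ≠ c' (p x)) ∧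
    (∀ L : ℕ, 1 ≤ L → (∀ x : V, c x < 2 ^ L) → ∀ x : V, c' x < 2 * L) := by
  refine ⟨fun x hx => ?_, fun L hL hbound x => ?_⟩
  · have hne := Nat.two_mul_add_ite_testBit_ne (hk x hx).1
    by_cases hroot : p (p x) = p x
    · simpa [hc'nonroot x hx, hc'root _ hroot] using hne 0
    · rw [hc'nonroot x hx, hc'nonroot _ hroot]
      exact hne _
  · by_cases hx : p x = x
    · rw [hc'root x hx]
      split <;> omega
    · have hkL := Nat.lt_of_testBit_ne_of_lt_two_pow (hbound x) (hbound (p x)) (hk x hx).1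
      rw [hc'nonroot x hx]
      split <;> omega

/-- **One round of Cole–Vishkin deterministic coin tossing.**
Let `p` be a parent function defining a rooted forest on a finite type `V`, `c` a
proper coloring, `k x` the least bit position where `c x` and `c (p x)` differ
(for non-roots), and `c'` the updated coloring: `c' x = 2 * k x + b x` for non-roots
(`b x` = the `k x`-th bit of `c x`), and `c' x` = the `0`-th bit of `c x` for roots.
Then `c'` is again proper, and if all colors `c x` are `< 2 ^ L` with `L ≥ 1`, then
all new colors `c' x` are `< 2 * L`. -/
theorem cole_vishkin_round {V : Type*} [Fintype V] (p : V → V)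
    (hforest : ∀ x : V, ∃ n : ℕ, p^[n + 1] x = p^[n] x)
    (c : V → ℕ) (hc : ∀ x : V, p x ≠ x → c x ≠ c (p x))
    (k : V → ℕ)
    (hk : ∀ x : V, p x ≠ x →
      (c x).testBit (k x) ≠ (c (p x)).testBit (k x) ∧
      ∀ j : ℕ, j < k x → (c x).testBit j = (c (p x)).testBit j)
    (c' : V → ℕ)
    (hc'nonroot : ∀ x : V, p x ≠ x →
      c' x = 2 * k x + (if (c x).testBit (k x) then 1 else 0))
    (hc'root : ∀ x : V, p x = x → c' x = (if (c x).testBit 0 then 1 else 0)) :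
    (∀ x : V, p x ≠ x → c' x ≠ c' (p x)) ∧
    (∀ L : ℕ, 1 ≤ L → (∀ x : V, c x < 2 ^ L) → ∀ x : V, c' x < 2 * L) :=
  cole_vishkin_round_general p c k hk c' hc'nonroot hc'root
end

section
/- Let p : Fin N → Fin N be a parent function defining a rooted forest on Fin N (for every x there exists n with p^(n+1)(x) = p^n(x)). Define the Cole–Vishkin update on colorings c : Fin N → ℕ by: if p(x) ≠ x, c'(x) = 2·k(x) + b(x) where k(x) is the least index at which the binary digits of c(x) and c(p(x)) differ and b(x) is the k(x)-th binary digit of c(x); if p(x) = x, c'(x) is the 0-th binary digit of c(x). Starting from the coloring c₀(x) = x (as a natural number), there exists J such that the J-th iterate c_J of the update applied to c₀ is a proper coloring of the forest (c_J(x) ≠ c_J(p(x)) whenever p(x) ≠ x) taking values in {0, 1, 2, 3, 4, 5}, i.e., using at most 6 colors. -/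
/-!
If adjacent colors differ, the new color `2 k + b` of a non-root `x` determines the first
index `k` at which `c x` and `c (p x)` differ and the bit `b` of `c x` there; equal new
colors at `x` and `p x` would make `c (p x)` carry the same bit at that same index, so the
update keeps the coloring proper. A root gets color `2 * 0 + b`, the same shape with
`k = 0`. Colors below `2 ^ b` become colors below `2 b`, so iterating brings all colors
below `8 = 2 ^ 3`, and one more round brings them below `6`.
-/

/-- The least bit position at which the binary expansions of `n` and `m` differ
(`0` if `n = m`). -/
def cvDiffBit (n m : ℕ) : ℕ :=
  if h : n = m then 0
  else Nat.find (p := fun k => n.testBit k ≠ m.testBit k)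
    (by
      by_contra hc
      push_neg at hc
      exact h (Nat.eq_of_testBit_eq fun i => hc i))

/-- The Cole–Vishkin update of a coloring `c` of the rooted forest with parent
function `p`: a non-root `x` gets the new color `2 * k + b` where `k` is the least bit
at which `c x` and `c (p x)` differ and `b` is the `k`-th bit of `c x`; a root gets the
`0`-th bit of its color. -/
def cvUpdate {N : ℕ} (p : Fin N → Fin N) (c : Fin N → ℕ) : Fin N → ℕ := fun x =>
  if p x = x then (if (c x).testBit 0 then 1 else 0)
  else 2 * cvDiffBit (c x) (c (p x)) +
    (if (c x).testBit (cvDiffBit (c x) (c (p x))) then 1 else 0)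

def IsProperColoring {N : ℕ} (p : Fin N → Fin N) (c : Fin N → ℕ) : Prop :=
  ∀ x, p x ≠ x → c x ≠ c (p x)

lemma cvDiffBit_spec {n m : ℕ} (h : n ≠ m) :
    n.testBit (cvDiffBit n m) ≠ m.testBit (cvDiffBit n m) := by
  rw [cvDiffBit, dif_neg h]
  exact Nat.find_spec (p := fun k => n.testBit k ≠ m.testBit k) _

lemma cvDiffBit_lt {n m b : ℕ} (hb : 0 < b) (hn : n < 2 ^ b) (hm : m < 2 ^ b) :
    cvDiffBit n m < b := by
  rw [cvDiffBit]
  split_ifs with h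
  · exact hb
  · rw [Nat.find_lt_iff]
    by_contra! hc
    refine h (Nat.eq_of_testBit_eq fun i => ?_)
    rcases lt_or_ge i b with hi | hi
    · exact hc i hi
    · have hpow : 2 ^ b ≤ 2 ^ i := Nat.pow_le_pow_right two_pos hi
      rw [Nat.testBit_eq_false_of_lt (hn.trans_le hpow),
        Nat.testBit_eq_false_of_lt (hm.trans_le hpow)]

lemma two_mul_add_toNat_inj {k k' : ℕ} {a a' : Bool}
    (h : 2 * k + a.toNat = 2 * k' + a'.toNat) : k = k' ∧ a = a' := by
  cases a <;> cases a' <;> simp only [Bool.toNat_false, Bool.toNat_true, and_true] at h ⊢ <;> omega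

section

variable {N : ℕ} {p : Fin N → Fin N} {c : Fin N → ℕ} {x : Fin N}

lemma cvUpdate_of_isRoot (hx : p x = x) :
    cvUpdate p c x = 2 * 0 + ((c x).testBit 0).toNat := by
  simp [cvUpdate, hx, Bool.toNat]

lemma cvUpdate_of_not_isRoot (hx : p x ≠ x) :
    cvUpdate p c x = 2 * cvDiffBit (c x) (c (p x)) +
      ((c x).testBit (cvDiffBit (c x) (c (p x)))).toNat := by
  simp [cvUpdate, hx, Bool.toNat]

theorem IsProperColoring.cvUpdate (hc : IsProperColoring p c) :
    IsProperColoring p (cvUpdate p c) := by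
  intro x hx heq
  have hspec := cvDiffBit_spec (hc x hx)
  rw [cvUpdate_of_not_isRoot hx] at heq
  by_cases hr : p (p x) = p x
  · rw [cvUpdate_of_isRoot hr] at heq
    obtain ⟨hk, hbit⟩ := two_mul_add_toNat_inj heq
    exact hspec (hk ▸ hbit)
  · rw [cvUpdate_of_not_isRoot hr] at heq
    obtain ⟨hk, hbit⟩ := two_mul_add_toNat_inj heq
    exact hspec (hk ▸ hbit)

lemma cvUpdate_lt {b : ℕ} (hb : 0 < b) (hc : ∀ x, c x < 2 ^ b) (x : Fin N) :
    cvUpdate p c x < 2 * b := by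
  by_cases hx : p x = x
  · rw [cvUpdate_of_isRoot hx]
    have := Bool.toNat_le ((c x).testBit 0)
    omega
  · rw [cvUpdate_of_not_isRoot hx]
    have := cvDiffBit_lt hb (hc x) (hc (p x))
    have := Bool.toNat_le ((c x).testBit (cvDiffBit (c x) (c (p x))))
    omega

lemma two_mul_le_two_pow_pred {b : ℕ} (hb : 4 ≤ b) : 2 * b ≤ 2 ^ (b - 1) := by
  obtain ⟨n, rfl⟩ := Nat.exists_eq_add_of_le' hb
  have h : 2 ^ (n + 4 - 1) = 2 ^ n * 8 := by
    rw [show n + 4 - 1 = n + 3 by omega, pow_add]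
    norm_num
  have := Nat.lt_two_pow_self (n := n)
  omega

theorem exists_iterate_cvUpdate_lt_eight (b : ℕ) (c : Fin N → ℕ) (hc : ∀ x, c x < 2 ^ b)
    (hp : IsProperColoring p c) :
    ∃ J, IsProperColoring p ((cvUpdate p)^[J] c) ∧ ∀ x, (cvUpdate p)^[J] c x < 2 ^ 3 := by
  induction b using Nat.strong_induction_on generalizing c with
  | _ b ih =>
    by_cases hb : b ≤ 3
    · exact ⟨0, hp, fun x => (hc x).trans_le (Nat.pow_le_pow_right two_pos hb)⟩
    · have hc' (x : Fin N) : cvUpdate p c x < 2 ^ (b - 1) :=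
        (cvUpdate_lt (by omega) hc x).trans_le (two_mul_le_two_pow_pred (by omega))
      obtain ⟨J, hJ⟩ := ih (b - 1) (by omega) (cvUpdate p c) hc' hp.cvUpdate
      exact ⟨J + 1, by simpa only [Function.iterate_succ_apply] using hJ⟩

end

theorem cole_vishkin_six_coloring_general {N : ℕ} (p : Fin N → Fin N) :
    ∃ J : ℕ,
      (∀ x : Fin N, p x ≠ x →
        (cvUpdate p)^[J] (fun v => (v : ℕ)) x ≠ (cvUpdate p)^[J] (fun v => (v : ℕ)) (p x)) ∧
      (∀ x : Fin N, (cvUpdate p)^[J] (fun v => (v : ℕ)) x < 6) := by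
  have hproper : IsProperColoring p (fun v => (v : ℕ)) := fun x hx h => hx (Fin.ext h.symm)
  obtain ⟨J, hJp, hJb⟩ := exists_iterate_cvUpdate_lt_eight N (fun v => (v : ℕ))
    (fun x => x.isLt.trans Nat.lt_two_pow_self) hproper
  refine ⟨J + 1, ?_, fun x => ?_⟩
  · rw [Function.iterate_succ']
    exact hJp.cvUpdate
  · rw [Function.iterate_succ_apply']
    exact cvUpdate_lt (b := 3) three_pos hJb x

/-- **Cole–Vishkin six-coloring.** For a rooted forest on `Fin N` given
by a parent function `p`, some iterate of the Cole–Vishkin update, starting from the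
coloring `c₀ x = x`, is a proper coloring using at most `6` colors `{0, …, 5}`. -/
theorem cole_vishkin_six_coloring {N : ℕ} (p : Fin N → Fin N)
    (hforest : ∀ x : Fin N, ∃ n : ℕ, p^[n + 1] x = p^[n] x) :
    ∃ J : ℕ,
      (∀ x : Fin N, p x ≠ x →
        (cvUpdate p)^[J] (fun v => (v : ℕ)) x ≠ (cvUpdate p)^[J] (fun v => (v : ℕ)) (p x)) ∧
      (∀ x : Fin N, (cvUpdate p)^[J] (fun v => (v : ℕ)) x < 6) :=
  cole_vishkin_six_coloring_general p
end

section
/- Let p : V → V be a parent function defining a rooted forest on a finite type V, and let G be the associated simple graph whose edges are the pairs {x, p(x)} for non-root vertices x. Let χ : V → Fin m be a proper vertex coloring of G (adjacent vertices get different colors). For each color t, let G_t be the subgraph of G whose edges are exactly those edges {x, p(x)} with χ(x) = t. Then for every t, every edge of G_t has an endpoint whose degree in G_t is exactly 1; consequently every connected component of G_t is a star. -/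
/-- A simple graph is a *star forest* (galaxy) if every connected component is a star:
each component contains a center `c` such that every other vertex of the component is
adjacent to `c` and every edge of the component has `c` as an endpoint. (A single
vertex and a single edge both count as stars.) -/
def IsStarForest {V : Type*} (G : SimpleGraph V) : Prop :=
  ∀ v : V, ∃ c : V, G.Reachable v c ∧
    (∀ u : V, G.Reachable v u → u ≠ c → G.Adj u c) ∧
    (∀ u w : V, G.Adj u w → G.Reachable v u → u = c ∨ w = c)

/-!
Properness of `χ` means a vertex of color `t` never has a child of color `t`, so in `Gt` it is
joined only to its parent: every vertex of color `t` is a leaf, and every edge has an endpoint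
of color `t`. A graph in which every edge has a leaf endpoint is a star forest: in each
component with an edge, the vertex that is not a leaf (or either end of an isolated edge)
is adjacent only to leaves and is the center.
-/

namespace SimpleGraph

variable {V : Type*} {H : SimpleGraph V}

lemma neighborSet_eq_singleton_of_ncard_eq_one {x y : V} (hxy : H.Adj x y)
    (hx : (H.neighborSet x).ncard = 1) : H.neighborSet x = {y} := by
  obtain ⟨a, ha⟩ := Set.ncard_eq_one.1 hx
  have hy : y ∈ H.neighborSet x := hxy
  rw [ha, Set.mem_singleton_iff] at hy
  rw [ha, hy]

lemma eq_or_adj_of_reachable_of_forall_adj_neighborSet_eq {c u : V}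
    (hc : ∀ w, H.Adj c w → H.neighborSet w = {c}) (hu : H.Reachable c u) :
    u = c ∨ H.Adj c u := by
  rw [reachable_iff_reflTransGen] at hu
  induction hu with
  | refl => exact Or.inl rfl
  | @tail b u _ hbu ih =>
    rcases ih with rfl | hcb
    · exact Or.inr hbu
    · have hu : u ∈ H.neighborSet b := hbu
      rw [hc b hcb, Set.mem_singleton_iff] at hu
      exact Or.inl hu

lemma exists_reachable_forall_adj_neighborSet_eq
    (hleaf : ∀ x y, H.Adj x y → (H.neighborSet x).ncard = 1 ∨ (H.neighborSet y).ncard = 1)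
    (v : V) : ∃ c, H.Reachable v c ∧ ∀ w, H.Adj c w → H.neighborSet w = {c} := by
  by_cases hv : ∀ w, H.Adj v w → H.neighborSet w = {v}
  · exact ⟨v, .refl v, hv⟩
  push Not at hv
  obtain ⟨z, hvz, hz⟩ := hv
  -- `z` is not a leaf, so each edge at `z` has its leaf endpoint on the other side
  have hz_ncard : (H.neighborSet z).ncard ≠ 1 := fun h =>
    hz (neighborSet_eq_singleton_of_ncard_eq_one hvz.symm h)
  refine ⟨z, hvz.reachable, fun w hzw => ?_⟩
  exact neighborSet_eq_singleton_of_ncard_eq_one hzw.symm ((hleaf z w hzw).resolve_left hz_ncard)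

end SimpleGraph

open SimpleGraph in
lemma isStarForest_of_forall_adj_ncard_neighborSet_eq_one {V : Type*} {H : SimpleGraph V}
    (hleaf : ∀ x y, H.Adj x y → (H.neighborSet x).ncard = 1 ∨ (H.neighborSet y).ncard = 1) :
    IsStarForest H := by
  intro v
  obtain ⟨c, hvc, hc⟩ := exists_reachable_forall_adj_neighborSet_eq hleaf v
  have hcomp : ∀ u, H.Reachable v u → u = c ∨ H.Adj c u := fun u hvu =>
    eq_or_adj_of_reachable_of_forall_adj_neighborSet_eq hc (hvc.symm.trans hvu)
  refine ⟨c, hvc, fun u hvu huc => ((hcomp u hvu).resolve_left huc).symm, ?_⟩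
  intro u w huw hvu
  refine (hcomp u hvu).imp id fun hcu => ?_
  have hw : w ∈ H.neighborSet u := huw
  rwa [hc u hcu, Set.mem_singleton_iff] at hw

section ColorClass

variable {V α : Type*} (p : V → V) (χ : V → α) (t : α)

def colorClassGraph : SimpleGraph V :=
  SimpleGraph.fromRel fun x y => p x ≠ x ∧ y = p x ∧ χ x = t

variable {p χ t}

lemma colorClassGraph_adj_eq_parent (hχ : ∀ x, p x ≠ x → χ x ≠ χ (p x)) {x y : V}
    (hxy : (colorClassGraph p χ t).Adj x y) (hx : χ x = t) : y = p x := by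
  rcases (SimpleGraph.fromRel_adj _ x y).1 hxy with ⟨-, ⟨-, hy, -⟩ | ⟨hy, rfl, hyt⟩⟩
  · exact hy
  · exact absurd (hyt.trans hx.symm) (hχ y hy)

lemma ncard_neighborSet_colorClassGraph_of_color_eq (hχ : ∀ x, p x ≠ x → χ x ≠ χ (p x))
    {x y : V} (hxy : (colorClassGraph p χ t).Adj x y) (hx : χ x = t) :
    ((colorClassGraph p χ t).neighborSet x).ncard = 1 := by
  have hN : (colorClassGraph p χ t).neighborSet x = {y} := by
    ext z
    rw [SimpleGraph.mem_neighborSet, Set.mem_singleton_iff]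
    refine ⟨fun hxz => ?_, fun hzy => hzy ▸ hxy⟩
    rw [colorClassGraph_adj_eq_parent hχ hxz hx, colorClassGraph_adj_eq_parent hχ hxy hx]
  rw [hN, Set.ncard_singleton]

lemma colorClassGraph_adj_color_eq {x y : V} (hxy : (colorClassGraph p χ t).Adj x y) :
    χ x = t ∨ χ y = t := by
  rcases (SimpleGraph.fromRel_adj _ x y).1 hxy with ⟨-, ⟨-, -, hx⟩ | ⟨-, -, hy⟩⟩
  · exact Or.inl hx
  · exact Or.inr hy

lemma ncard_neighborSet_colorClassGraph_eq_one_or (hχ : ∀ x, p x ≠ x → χ x ≠ χ (p x))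
    {x y : V} (hxy : (colorClassGraph p χ t).Adj x y) :
    ((colorClassGraph p χ t).neighborSet x).ncard = 1 ∨
      ((colorClassGraph p χ t).neighborSet y).ncard = 1 :=
  (colorClassGraph_adj_color_eq hxy).imp (ncard_neighborSet_colorClassGraph_of_color_eq hχ hxy)
    (ncard_neighborSet_colorClassGraph_of_color_eq hχ hxy.symm)

end ColorClass

theorem star_subgraphs_of_proper_coloring_general {V : Type*} (p : V → V)
    (m : ℕ) (χ : V → Fin m)
    (G : SimpleGraph V) (hG : G = SimpleGraph.fromRel (fun x y => p x ≠ x ∧ y = p x))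
    (hχ : ∀ x y : V, G.Adj x y → χ x ≠ χ y) :
    ∀ t : Fin m, ∀ Gt : SimpleGraph V,
      Gt = SimpleGraph.fromRel (fun x y => p x ≠ x ∧ y = p x ∧ χ x = t) →
      (∀ x y : V, Gt.Adj x y →
        (Gt.neighborSet x).ncard = 1 ∨ (Gt.neighborSet y).ncard = 1) ∧
      IsStarForest Gt := by
  rintro t Gt rfl
  have hproper : ∀ x, p x ≠ x → χ x ≠ χ (p x) := fun x hx =>
    hχ x (p x) (hG ▸ (SimpleGraph.fromRel_adj _ x (p x)).2 ⟨Ne.symm hx, Or.inl ⟨hx, rfl⟩⟩)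
  have hleaf : ∀ x y, (colorClassGraph p χ t).Adj x y →
      ((colorClassGraph p χ t).neighborSet x).ncard = 1 ∨
        ((colorClassGraph p χ t).neighborSet y).ncard = 1 :=
    fun _ _ => ncard_neighborSet_colorClassGraph_eq_one_or hproper
  exact ⟨hleaf, isStarForest_of_forall_adj_ncard_neighborSet_eq_one hleaf⟩

/-- Let `p` be a parent function defining a rooted forest on a finite
type `V`, let `G` be the associated graph (edges `{x, p x}` for non-roots `x`), and let
`χ` be a proper vertex coloring of `G` with `m` colors. For each color `t`, the
subgraph `Gt` consisting of the edges `{x, p x}` with `χ x = t` has the property that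
every edge of `Gt` has an endpoint of degree exactly `1` in `Gt`; consequently every
connected component of `Gt` is a star. -/
theorem star_subgraphs_of_proper_coloring {V : Type*} [Fintype V] (p : V → V)
    (hforest : ∀ x : V, ∃ n : ℕ, p^[n + 1] x = p^[n] x)
    (m : ℕ) (χ : V → Fin m)
    (G : SimpleGraph V) (hG : G = SimpleGraph.fromRel (fun x y => p x ≠ x ∧ y = p x))
    (hχ : ∀ x y : V, G.Adj x y → χ x ≠ χ y) :
    ∀ t : Fin m, ∀ Gt : SimpleGraph V,
      Gt = SimpleGraph.fromRel (fun x y => p x ≠ x ∧ y = p x ∧ χ x = t) →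
      (∀ x y : V, Gt.Adj x y →
        (Gt.neighborSet x).ncard = 1 ∨ (Gt.neighborSet y).ncard = 1) ∧
      IsStarForest Gt :=
  star_subgraphs_of_proper_coloring_general p m χ G hG hχ
end

section
/- Let N and d be positive natural numbers and let G be a simple graph on the vertex set Fin N in which every vertex has degree at most d. Then the edge set of G can be partitioned into 6d classes such that each class, viewed as a subgraph on the same vertex set, is a star forest, i.e., every connected component of each class is a star (equivalently, every edge of each class has an endpoint whose degree within that class is exactly 1). -/
namespace SimpleGraph

variable {V : Type*}

theorem colorable_of_forall_ncard_neighborSet_lt [Finite V] {H : SimpleGraph V} {n : ℕ}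
    (hdeg : ∀ v, (H.neighborSet v).ncard < n) : H.Colorable n := by
  classical
  obtain ⟨f₀⟩ : Nonempty (V → Fin n) := by
    rcases isEmpty_or_nonempty V with _ | ⟨⟨v⟩⟩
    · infer_instance
    · exact ⟨fun _ => ⟨0, (Nat.zero_le _).trans_lt (hdeg v)⟩⟩
  suffices h : ∀ s : Set V, s.Finite →
      ∃ f : V → Fin n, s.Pairwise fun u v => H.Adj u v → f u ≠ f v by
    obtain ⟨f, hf⟩ := h Set.univ Set.finite_univ
    exact ⟨Coloring.mk f fun {u v} huv => hf (Set.mem_univ u) (Set.mem_univ v) huv.ne huv⟩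
  intro s hs
  induction s, hs using Set.Finite.induction_on with
  | empty => exact ⟨f₀, Set.pairwise_empty _⟩
  | @insert a s ha _ ih =>
    obtain ⟨f, hf⟩ := ih
    -- the neighbours of `a` use fewer than `n` colours, so one colour is still free at `a`
    obtain ⟨c, hc⟩ : ∃ c : Fin n, c ∉ f '' H.neighborSet a := by
      by_contra! hall
      have : (f '' H.neighborSet a).ncard < n :=
        (Set.ncard_image_le (Set.toFinite _)).trans_lt (hdeg a)
      rw [Set.eq_univ_of_forall hall, Set.ncard_univ, Nat.card_eq_fintype_card,
        Fintype.card_fin] at this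
      exact this.false
    have hfree : ∀ b, H.Adj a b → c ≠ f b := fun b hab hcb => hc ⟨b, hab, hcb.symm⟩
    refine ⟨Function.update f a c, Set.pairwise_insert.2 ⟨?_, fun b _ hab => ?_⟩⟩
    · intro u hu v hv huv hadj
      rw [Function.update_of_ne (ne_of_mem_of_not_mem hu ha),
        Function.update_of_ne (ne_of_mem_of_not_mem hv ha)]
      exact hf hu hv huv hadj
    · rw [Function.update_self, Function.update_of_ne hab.symm]
      exact ⟨hfree b, fun hba => (hfree b hba.symm).symm⟩

theorem ncard_neighborSet_lineGraph_le [Finite V] {G : SimpleGraph V} {d : ℕ}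
    (hdeg : ∀ v, (G.neighborSet v).ncard ≤ d) (e : G.edgeSet) :
    (G.lineGraph.neighborSet e).ncard ≤ 2 * d := by
  rcases e with ⟨⟨a, b⟩, he⟩
  have hsub : Subtype.val '' G.lineGraph.neighborSet ⟨s(a, b), he⟩ ⊆
      (fun u => s(a, u)) '' G.neighborSet a ∪ (fun u => s(b, u)) '' G.neighborSet b := by
    rintro _ ⟨⟨f, hf⟩, hadj, rfl⟩
    obtain ⟨-, v, hva, hvf⟩ := lineGraph_adj_iff_exists.1 hadj
    obtain ⟨u, rfl⟩ := Sym2.mem_iff_exists.1 hvf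
    rcases Sym2.mem_iff.1 hva with rfl | rfl
    · exact Or.inl ⟨u, hf, rfl⟩
    · exact Or.inr ⟨u, hf, rfl⟩
  calc (G.lineGraph.neighborSet ⟨s(a, b), he⟩).ncard
      = (Subtype.val '' G.lineGraph.neighborSet ⟨s(a, b), he⟩).ncard :=
        (Set.ncard_image_of_injective _ Subtype.val_injective).symm
    _ ≤ ((fun u => s(a, u)) '' G.neighborSet a).ncard +
          ((fun u => s(b, u)) '' G.neighborSet b).ncard :=
        (Set.ncard_le_ncard hsub (Set.toFinite _)).trans (Set.ncard_union_le _ _)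
    _ ≤ d + d := add_le_add ((Set.ncard_image_le (Set.toFinite _)).trans (hdeg a))
        ((Set.ncard_image_le (Set.toFinite _)).trans (hdeg b))
    _ = 2 * d := (two_mul d).symm

theorem Reachable.eq_or_adj_of_subsingleton_neighborSet {H : SimpleGraph V}
    (hH : ∀ v, (H.neighborSet v).Subsingleton) {v u : V} (h : H.Reachable v u) :
    u = v ∨ H.Adj v u := by
  obtain ⟨p⟩ := h
  induction p with
  | nil => exact Or.inl rfl
  | cons hab _ ih =>
    rcases ih with rfl | hbc
    · exact Or.inr hab
    · exact Or.inl (hH _ hbc hab.symm)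

theorem isStarForest_of_subsingleton_neighborSet {H : SimpleGraph V}
    (hH : ∀ v, (H.neighborSet v).Subsingleton) : IsStarForest H := by
  intro v
  refine ⟨v, Reachable.refl v, fun u hu hne => ?_, fun u w huw hu => ?_⟩
  · exact ((hu.eq_or_adj_of_subsingleton_neighborSet hH).resolve_left hne).symm
  · rcases hu.eq_or_adj_of_subsingleton_neighborSet hH with rfl | hvu
    · exact Or.inl rfl
    · exact Or.inr (hH u huw hvu.symm)

theorem fromRel_adj_and_sym2_iff (G : SimpleGraph V) (p : Sym2 V → Prop) {x y : V} :
    (fromRel fun x y => G.Adj x y ∧ p s(x, y)).Adj x y ↔ G.Adj x y ∧ p s(x, y) := by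
  rw [fromRel_adj, Sym2.eq_swap]
  exact ⟨fun ⟨_, h⟩ => h.elim id fun h => ⟨h.1.symm, h.2⟩, fun h => ⟨h.1.ne, Or.inl h⟩⟩

theorem Coloring.subsingleton_neighborSet_of_lineGraph {G : SimpleGraph V} {α : Type*}
    (C : G.lineGraph.Coloring α) (c : Sym2 V → α)
    (hc : ∀ e : G.edgeSet, c e = C e) (i : α) (v : V) :
    ((fromRel fun x y => G.Adj x y ∧ c s(x, y) = i).neighborSet v).Subsingleton := by
  intro y hy z hz
  rw [mem_neighborSet, fromRel_adj_and_sym2_iff G fun e => c e = i] at hy hz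
  by_contra hyz
  have hadj : G.lineGraph.Adj ⟨s(v, y), hy.1⟩ ⟨s(v, z), hz.1⟩ :=
    lineGraph_adj_iff_exists.2
      ⟨fun h => hyz (Sym2.congr_right.1 (congrArg Subtype.val h)), v, Sym2.mem_mk_left v y,
        Sym2.mem_mk_left v z⟩
  exact C.valid hadj (by rw [← hc, ← hc]; exact hy.2.trans hz.2.symm)

end SimpleGraph

open SimpleGraph in
theorem star_decomposition_general (N d : ℕ) (hd : 0 < d)
    (G : SimpleGraph (Fin N)) (hdeg : ∀ v : Fin N, (G.neighborSet v).ncard ≤ d) :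
    ∃ c : Sym2 (Fin N) → Fin (6 * d),
      ∀ i : Fin (6 * d),
        IsStarForest (SimpleGraph.fromRel (fun x y => G.Adj x y ∧ c s(x, y) = i)) := by
  classical
  obtain ⟨C⟩ : G.lineGraph.Colorable (6 * d) := colorable_of_forall_ncard_neighborSet_lt
    fun e => (ncard_neighborSet_lineGraph_le hdeg e).trans_lt (by omega)
  let c : Sym2 (Fin N) → Fin (6 * d) := fun e =>
    if he : e ∈ G.edgeSet then C ⟨e, he⟩ else ⟨0, by omega⟩
  refine ⟨c, fun i => isStarForest_of_subsingleton_neighborSet ?_⟩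
  exact C.subsingleton_neighborSet_of_lineGraph c (fun e => dif_pos e.2) i

/-- **Star decomposition of a graph.** The edges of a simple graph on
`Fin N` with maximum degree at most `d` can be partitioned into `6 * d` classes such
that every class is a star forest (every connected component of each class is a
star). -/
theorem star_decomposition (N d : ℕ) (hN : 0 < N) (hd : 0 < d)
    (G : SimpleGraph (Fin N)) (hdeg : ∀ v : Fin N, (G.neighborSet v).ncard ≤ d) :
    ∃ c : Sym2 (Fin N) → Fin (6 * d),
      ∀ i : Fin (6 * d),
        IsStarForest (SimpleGraph.fromRel (fun x y => G.Adj x y ∧ c s(x, y) = i)) :=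
  star_decomposition_general N d hd G hdeg
end

section
/- Let H be an N×N complex Hermitian matrix with zero diagonal such that every row of H has at most d nonzero entries, where d ≥ 1. Then there exist Hermitian matrices H_1, …, H_{6d}, each with zero diagonal, such that H = H_1 + ⋯ + H_{6d}, the supports of the H_j are pairwise disjoint and each nonzero entry of each H_j equals the corresponding entry of H (i.e., for every pair (i,k), (H_j)_{ik} ∈ {0, H_{ik}} and at most one j has (H_j)_{ik} ≠ 0), and the support graph of each H_j is a star forest (every connected component is a star). -/
/-- The support graph of a square matrix: distinct indices `i` and `k` are adjacent
if and only if the `(i, k)` entry is nonzero. -/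
def supportGraph {N : ℕ} (H : Matrix (Fin N) (Fin N) ℂ) : SimpleGraph (Fin N) :=
  SimpleGraph.fromRel (fun i k => H i k ≠ 0)

/-!
Colour the edges of the support graph `G` of `H` so that edges sharing a vertex get different
colours, i.e. properly colour the line graph of `G`. An edge of `G` meets fewer than `2 * d`
other edges, so greedy colouring needs at most `2 * d ≤ 6 * d` colours. Each colour class is a
matching, and a graph in which every vertex has at most one neighbour is a star forest. The
summands are `H` restricted to the colour classes.
-/

namespace SimpleGraph

variable {V : Type*} {G : SimpleGraph V}

theorem colorable_of_ncard_neighborSet_lt [Finite V] {n : ℕ}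
    (h : ∀ v, (G.neighborSet v).ncard < n) : G.Colorable n := by
  classical
  have := Fintype.ofFinite V
  suffices ∀ s : Finset V, ∃ f : V → Fin n, ∀ u ∈ s, ∀ v ∈ s, G.Adj u v → f u ≠ f v by
    obtain ⟨f, hf⟩ := this Finset.univ
    exact ⟨Coloring.mk f fun {u v} huv => hf u (Finset.mem_univ u) v (Finset.mem_univ v) huv⟩
  intro s
  induction s using Finset.induction_on with
  | empty => exact ⟨fun v => ⟨0, (h v).trans_le' (Nat.zero_le _)⟩, by simp⟩
  | insert a s ha ih =>
    obtain ⟨f, hf⟩ := ih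
    have hused : ((s.filter (G.Adj a)).image f).card < (Finset.univ : Finset (Fin n)).card := by
      calc ((s.filter (G.Adj a)).image f).card
          ≤ (s.filter (G.Adj a)).card := Finset.card_image_le
        _ = ((s.filter (G.Adj a) : Finset V) : Set V).ncard := (Set.ncard_coe_finset _).symm
        _ ≤ (G.neighborSet a).ncard :=
          Set.ncard_le_ncard (fun v hv => (Finset.mem_filter.1 hv).2) (Set.toFinite _)
        _ < n := h a
        _ = _ := (Finset.card_fin n).symm
    obtain ⟨c, -, hc⟩ := Finset.exists_mem_notMem_of_card_lt_card hused
    refine ⟨Function.update f a c, ?_⟩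
    simp only [Finset.mem_insert]
    rintro u (rfl | hu) v (rfl | hv) huv
    · exact absurd rfl huv.ne
    · simp only [Function.update_self, Function.update_of_ne (ne_of_mem_of_not_mem hv ha)]
      exact fun hcv => hc (Finset.mem_image.2 ⟨v, by simp [hv, huv], hcv.symm⟩)
    · simp only [Function.update_self, Function.update_of_ne (ne_of_mem_of_not_mem hu ha)]
      exact fun hcu => hc (Finset.mem_image.2 ⟨u, by simp [hu, huv.symm], hcu⟩)
    · simp only [Function.update_of_ne (ne_of_mem_of_not_mem hu ha),
        Function.update_of_ne (ne_of_mem_of_not_mem hv ha)]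
      exact hf u hu v hv huv

theorem ncard_neighborSet_lineGraph_lt [Finite V] {d : ℕ}
    (hd : ∀ v, (G.neighborSet v).ncard ≤ d) (e : G.edgeSet) :
    (G.lineGraph.neighborSet e).ncard < 2 * d := by
  classical
  obtain ⟨e, he⟩ := e
  induction e using Sym2.ind with | _ u v => ?_
  -- strict, because `s(u, v)` itself is incident to `u` but is not its own neighbour
  have hsub : Subtype.val '' G.lineGraph.neighborSet ⟨s(u, v), he⟩ ⊂
      G.incidenceSet u ∪ G.incidenceSet v := by
    refine (Set.ssubset_iff_of_subset ?_).2
      ⟨s(u, v), Or.inl ((G.mem_incidenceSet u v).2 he), ?_⟩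
    · rintro _ ⟨⟨f, hf⟩, hadj, rfl⟩
      obtain ⟨-, w, hw, hwf⟩ := lineGraph_adj_iff_exists.1 hadj
      rcases Sym2.mem_iff.1 hw with rfl | rfl
      · exact Or.inl ⟨hf, hwf⟩
      · exact Or.inr ⟨hf, hwf⟩
    · rintro ⟨f, hadj, hf⟩
      exact (G.lineGraph.mem_neighborSet _ _).1 hadj |>.ne (Subtype.ext hf.symm)
  have hinc : ∀ w, (G.incidenceSet w).ncard ≤ d := fun w =>
    (Set.ncard_congr' (G.incidenceSetEquivNeighborSet w)).trans_le (hd w)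
  calc (G.lineGraph.neighborSet ⟨s(u, v), he⟩).ncard
      = (Subtype.val '' G.lineGraph.neighborSet ⟨s(u, v), he⟩).ncard :=
        (Set.ncard_image_of_injective _ Subtype.val_injective).symm
    _ < (G.incidenceSet u ∪ G.incidenceSet v).ncard := Set.ncard_lt_ncard hsub
    _ ≤ (G.incidenceSet u).ncard + (G.incidenceSet v).ncard := Set.ncard_union_le _ _
    _ ≤ 2 * d := by linarith [hinc u, hinc v]

def Coloring.edgeLabeling {α : Type*} (C : G.lineGraph.Coloring α) : G.EdgeLabeling α :=
  show G.edgeSet → α from C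

theorem Coloring.eq_of_labelGraph_adj {α : Type*} (C : G.lineGraph.Coloring α) {j : α}
    {v u w : V} (hu : (C.edgeLabeling.labelGraph j).Adj v u)
    (hw : (C.edgeLabeling.labelGraph j).Adj v w) : u = w := by
  obtain ⟨hu, hCu⟩ := (EdgeLabeling.labelGraph_adj _ _).1 hu
  obtain ⟨hw, hCw⟩ := (EdgeLabeling.labelGraph_adj _ _).1 hw
  by_contra hne
  refine C.valid (lineGraph_adj_iff_exists.2 ⟨fun h => hne ?_, v, Sym2.mem_mk_left v u,
    Sym2.mem_mk_left v w⟩) (show C _ = C _ from hCu.trans hCw.symm)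
  exact Sym2.congr_right.1 (congrArg Subtype.val h)

theorem eq_or_adj_of_reachable (hG : ∀ v u w : V, G.Adj v u → G.Adj v w → u = w)
    {v x : V} (h : G.Reachable v x) : x = v ∨ G.Adj v x := by
  obtain ⟨p⟩ := h
  induction p with
  | nil => exact Or.inl rfl
  | cons hab _ ih =>
    rcases ih with rfl | hadj
    · exact Or.inr hab
    · exact Or.inl (hG _ _ _ hab.symm hadj).symm

end SimpleGraph

theorem isStarForest_of_adj_unique {V : Type*} {G : SimpleGraph V}
    (hG : ∀ v u w : V, G.Adj v u → G.Adj v w → u = w) : IsStarForest G := by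
  refine fun v => ⟨v, .refl v, fun u hr hne => ?_, fun u w huw hr => ?_⟩
  · exact ((G.eq_or_adj_of_reachable hG hr).resolve_left hne).symm
  · rcases G.eq_or_adj_of_reachable hG hr with rfl | hvu
    · exact Or.inl rfl
    · exact Or.inr (hG u w v huw hvu.symm)

namespace Matrix

variable {n R : Type*}

open scoped Classical in
noncomputable def restrictGraph [Zero R] (A : Matrix n n R) (F : SimpleGraph n) : Matrix n n R :=
  of fun i k => if F.Adj i k then A i k else 0

section Zero

variable [Zero R] (A : Matrix n n R) (F : SimpleGraph n)

theorem restrictGraph_apply_self (i : n) : A.restrictGraph F i i = 0 := by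
  simp [restrictGraph]

theorem restrictGraph_apply_eq_zero_or (i k : n) :
    A.restrictGraph F i k = 0 ∨ A.restrictGraph F i k = A i k := by
  by_cases h : F.Adj i k <;> simp [restrictGraph, h]

theorem adj_of_restrictGraph_apply_ne_zero {i k : n} (h : A.restrictGraph F i k ≠ 0) :
    F.Adj i k := by
  by_contra hik
  simp [restrictGraph, hik] at h

theorem subsingleton_setOf_restrictGraph_apply_ne_zero {K : Type*} {F : K → SimpleGraph n}
    (hF : Pairwise fun j l => Disjoint (F j) (F l)) (i k : n) :
    {j | A.restrictGraph (F j) i k ≠ 0}.Subsingleton := by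
  intro j hj l hl
  by_contra hjl
  exact SimpleGraph.disjoint_left.1 (hF hjl) i k (A.adj_of_restrictGraph_apply_ne_zero _ hj)
    (A.adj_of_restrictGraph_apply_ne_zero _ hl)

end Zero

theorem IsHermitian.restrictGraph [AddMonoid R] [StarAddMonoid R] {A : Matrix n n R}
    (hA : A.IsHermitian) (F : SimpleGraph n) : (A.restrictGraph F).IsHermitian := by
  refine IsHermitian.ext fun i k => ?_
  by_cases h : F.Adj i k
  · simp [Matrix.restrictGraph, h, h.symm, hA.apply]
  · simp [Matrix.restrictGraph, h, F.adj_comm k i]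

theorem sum_restrictGraph_labelGraph [AddCommMonoid R] {K : Type*} [Fintype K]
    {G : SimpleGraph n} (A : Matrix n n R) (C : G.EdgeLabeling K)
    (hA : ∀ i k, A i k ≠ 0 → G.Adj i k) :
    ∑ j, A.restrictGraph (C.labelGraph j) = A := by
  classical
  ext i k
  by_cases hik : G.Adj i k
  · simp [sum_apply, Matrix.restrictGraph, SimpleGraph.EdgeLabeling.labelGraph_adj, hik]
  · have hAik : A i k = 0 := not_not.1 fun h => hik (hA i k h)
    simp [sum_apply, Matrix.restrictGraph, SimpleGraph.EdgeLabeling.labelGraph_adj, hik, hAik]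

end Matrix

theorem supportGraph_adj_iff {N : ℕ} {H : Matrix (Fin N) (Fin N) ℂ} (hH : H.IsHermitian)
    {i k : Fin N} : (supportGraph H).Adj i k ↔ i ≠ k ∧ H i k ≠ 0 := by
  rw [supportGraph, SimpleGraph.fromRel_adj, ← hH.apply i k, ne_eq (star _), star_eq_zero,
    or_self]

theorem supportGraph_restrictGraph_le {N : ℕ} (H : Matrix (Fin N) (Fin N) ℂ)
    (F : SimpleGraph (Fin N)) : supportGraph (H.restrictGraph F) ≤ F := by
  intro i k hik
  rcases ((SimpleGraph.fromRel_adj _ _ _).1 hik).2 with h | h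
  · exact H.adj_of_restrictGraph_apply_ne_zero F h
  · exact (H.adj_of_restrictGraph_apply_ne_zero F h).symm

theorem hamiltonian_star_decomposition_general (N d : ℕ)
    (H : Matrix (Fin N) (Fin N) ℂ) (hherm : H.IsHermitian)
    (hdiag : ∀ i : Fin N, H i i = 0)
    (hsparse : ∀ i : Fin N, {k : Fin N | H i k ≠ 0}.ncard ≤ d) :
    ∃ Hs : Fin (6 * d) → Matrix (Fin N) (Fin N) ℂ,
      (∀ j, (Hs j).IsHermitian) ∧
      (∀ j, ∀ i : Fin N, Hs j i i = 0) ∧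
      (∑ j, Hs j) = H ∧
      (∀ j, ∀ i k : Fin N, Hs j i k = 0 ∨ Hs j i k = H i k) ∧
      (∀ i k : Fin N, {j : Fin (6 * d) | Hs j i k ≠ 0}.Subsingleton) ∧
      (∀ j, IsStarForest (supportGraph (Hs j))) := by
  set G := supportGraph H
  have hsupp : ∀ i k, H i k ≠ 0 → G.Adj i k := fun i k h =>
    (supportGraph_adj_iff hherm).2 ⟨fun hik => h (hik ▸ hdiag i), h⟩
  have hdeg : ∀ i, (G.neighborSet i).ncard ≤ d := fun i =>
    (Set.ncard_le_ncard fun k hk => ((supportGraph_adj_iff hherm).1 hk).2).trans (hsparse i)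
  obtain ⟨C⟩ : G.lineGraph.Colorable (6 * d) := G.lineGraph.colorable_of_ncard_neighborSet_lt
    fun e => (G.ncard_neighborSet_lineGraph_lt hdeg e).trans_le (by omega)
  refine ⟨fun j => H.restrictGraph (C.edgeLabeling.labelGraph j), fun j => hherm.restrictGraph _,
    fun j => H.restrictGraph_apply_self _, H.sum_restrictGraph_labelGraph _ hsupp,
    fun j => H.restrictGraph_apply_eq_zero_or _,
    H.subsingleton_setOf_restrictGraph_apply_ne_zero
      SimpleGraph.EdgeLabeling.pairwise_disjoint_labelGraph,
    fun j => isStarForest_of_adj_unique fun v u w hu hw => ?_⟩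
  exact C.eq_of_labelGraph_adj (supportGraph_restrictGraph_le _ _ hu)
    (supportGraph_restrictGraph_le _ _ hw)

/-- **Star decomposition of a Hamiltonian.** A Hermitian `N × N` matrix
`H` with zero diagonal and at most `d ≥ 1` nonzero entries per row can be written as a
sum of `6 * d` Hermitian matrices with zero diagonal, with pairwise disjoint supports,
each nonzero entry of each summand agreeing with the corresponding entry of `H`, such
that the support graph of each summand is a star forest. -/
theorem hamiltonian_star_decomposition (N d : ℕ) (hd : 1 ≤ d)
    (H : Matrix (Fin N) (Fin N) ℂ) (hherm : H.IsHermitian)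
    (hdiag : ∀ i : Fin N, H i i = 0)
    (hsparse : ∀ i : Fin N, {k : Fin N | H i k ≠ 0}.ncard ≤ d) :
    ∃ Hs : Fin (6 * d) → Matrix (Fin N) (Fin N) ℂ,
      (∀ j, (Hs j).IsHermitian) ∧
      (∀ j, ∀ i : Fin N, Hs j i i = 0) ∧
      (∑ j, Hs j) = H ∧
      (∀ j, ∀ i k : Fin N, Hs j i k = 0 ∨ Hs j i k = H i k) ∧
      (∀ i k : Fin N, {j : Fin (6 * d) | Hs j i k ≠ 0}.Subsingleton) ∧
      (∀ j, IsStarForest (supportGraph (Hs j))) :=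
  hamiltonian_star_decomposition_general N d H hherm hdiag hsparse
end

section
/- Let H be an N×N complex Hermitian matrix with at most one nonzero entry in each row (a 1-sparse Hamiltonian). Then the operator norm of H equals the maximum absolute value of its entries: ‖H‖ = max_{i,k} |H_{ik}|. -/
/-!
Evaluating `H` on basis vectors bounds every entry by `‖H‖`. Conversely, Hermitian symmetry makes
the columns of `H` 1-sparse as well, so `‖(H v)_i‖² = ∑_k |H_ik|² |v_k|²` and, summing over `i`
first, each `|v_k|²` is weighted by the single entry of column `k`, i.e. by at most `max |H_ik|²`.
-/

/-- The spectral (operator) norm of a square complex matrix, i.e. the operator norm of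
the induced linear map on the Euclidean space `ℂ^N`. -/
noncomputable def matOpNorm {N : ℕ} (H : Matrix (Fin N) (Fin N) ℂ) : ℝ :=
  ‖LinearMap.toContinuousLinearMap (Matrix.toEuclideanLin H)‖

open scoped Matrix.Norms.L2Operator

section SubsingletonSupport

variable {ι M N : Type*} [Fintype ι] [AddCommMonoid M] [AddCommMonoid N]

theorem Fintype.map_sum_of_subsingleton_support {f : ι → M}
    (hf : {k | f k ≠ 0}.Subsingleton) (g : M → N) (hg : g 0 = 0) :
    g (∑ k, f k) = ∑ k, g (f k) := by
  by_cases h : ∃ j, f j ≠ 0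
  · obtain ⟨j, hj⟩ := h
    have hzero : ∀ k ≠ j, f k = 0 := fun k hk => by_contra fun hk' => hk (hf hk' hj)
    rw [Fintype.sum_eq_single j hzero, Fintype.sum_eq_single j fun k hk => by rw [hzero k hk, hg]]
  · push Not at h
    simp [h, hg]

theorem Fintype.sum_le_of_subsingleton_support {f : ι → ℝ}
    (hf : {k | f k ≠ 0}.Subsingleton) {C : ℝ} (hfC : ∀ k, f k ≤ C) (hC : 0 ≤ C) :
    ∑ k, f k ≤ C := by
  by_cases h : ∃ j, f j ≠ 0
  · obtain ⟨j, hj⟩ := h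
    rw [Fintype.sum_eq_single j fun k hk => by_contra fun hk' => hk (hf hk' hj)]
    exact hfC j
  · push Not at h
    simpa [h] using hC

end SubsingletonSupport

namespace Matrix

variable {m n 𝕜 : Type*} [Fintype m] [Fintype n] [DecidableEq n] [RCLike 𝕜]

theorem norm_entry_le_l2_opNorm (A : Matrix m n 𝕜) (i : m) (j : n) : ‖A i j‖ ≤ ‖A‖ := by
  have h := A.l2_opNorm_mulVec (EuclideanSpace.single j 1)
  rw [PiLp.norm_single, norm_one, mul_one] at h
  refine le_trans ?_ (h.trans' (PiLp.norm_apply_le _ i))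
  simp

theorem l2_opNorm_le_of_subsingleton_support {A : Matrix m n 𝕜}
    (hrow : ∀ i, {j | A i j ≠ 0}.Subsingleton) (hcol : ∀ j, {i | A i j ≠ 0}.Subsingleton)
    {M : ℝ} (hM : ∀ i j, ‖A i j‖ ≤ M) (hM0 : 0 ≤ M) : ‖A‖ ≤ M := by
  rw [l2_opNorm_def]
  refine ContinuousLinearMap.opNorm_le_bound _ hM0 fun v => ?_
  refine (sq_le_sq₀ (norm_nonneg _) (by positivity)).mp ?_
  have hrow_sq : ∀ i, ‖(A *ᵥ v.ofLp) i‖ ^ 2 = ∑ j, ‖A i j‖ ^ 2 * ‖v j‖ ^ 2 := fun i => by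
    simp_rw [← mul_pow, ← norm_mul]
    exact Fintype.map_sum_of_subsingleton_support
      ((hrow i).anti fun j hj => left_ne_zero_of_mul hj) (‖·‖ ^ 2) (by simp)
  have hcol_sq : ∀ j, ∑ i, ‖A i j‖ ^ 2 ≤ M ^ 2 := fun j =>
    Fintype.sum_le_of_subsingleton_support (by simpa using hcol j)
      (fun i => pow_le_pow_left₀ (norm_nonneg _) (hM i j) 2) (sq_nonneg M)
  calc ‖_‖ ^ 2 = ∑ i, ∑ j, ‖A i j‖ ^ 2 * ‖v j‖ ^ 2 := by
        rw [EuclideanSpace.norm_sq_eq]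
        exact Fintype.sum_congr _ _ hrow_sq
    _ = ∑ j, (∑ i, ‖A i j‖ ^ 2) * ‖v j‖ ^ 2 := by
        rw [Finset.sum_comm]
        simp_rw [Finset.sum_mul]
    _ ≤ ∑ j, M ^ 2 * ‖v j‖ ^ 2 := by gcongr with j; exact hcol_sq j
    _ = (M * ‖v‖) ^ 2 := by rw [mul_pow, EuclideanSpace.norm_sq_eq, Finset.mul_sum]

end Matrix

/-- The spectral norm of a Hermitian matrix with at most one nonzero
entry in each row (a 1-sparse Hamiltonian) equals the maximum absolute value of its
entries. -/
theorem opNorm_eq_max_entry_of_one_sparse {N : ℕ}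
    (H : Matrix (Fin N) (Fin N) ℂ) (hherm : H.IsHermitian)
    (hsparse : ∀ i : Fin N, {k : Fin N | H i k ≠ 0}.Subsingleton) :
    matOpNorm H = ⨆ i : Fin N, ⨆ k : Fin N, ‖H i k‖ := by
  have hentry : ∀ i k, ‖H i k‖ ≤ ⨆ i : Fin N, ⨆ k : Fin N, ‖H i k‖ := fun i k =>
    (le_ciSup (Finite.bddAbove_range _) k).trans
      (le_ciSup (f := fun i => ⨆ k, ‖H i k‖) (Finite.bddAbove_range _) i)
  have hcol : ∀ k, {i | H i k ≠ 0}.Subsingleton := fun k => by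
    simpa [← hherm.apply k] using hsparse k
  change ‖H‖ = _
  refine le_antisymm ?upper ?lower
  case upper =>
    exact H.l2_opNorm_le_of_subsingleton_support hsparse hcol hentry
      (Real.iSup_nonneg fun i => Real.iSup_nonneg fun k => norm_nonneg _)
  case lower =>
    exact Real.iSup_le (fun i => Real.iSup_le (fun k => H.norm_entry_le_l2_opNorm i k)
      (norm_nonneg _)) (norm_nonneg _)
end

section
/- Let H be an N×N complex Hermitian matrix with zero diagonal whose support graph is a star forest, i.e., every edge of the support graph has at least one endpoint of degree exactly 1 (equivalently, every connected component of the support graph is a star). Then the operator norm of H equals its maximum Euclidean column norm: ‖H‖ = max_k ‖H e_k‖₂. -/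
/-!
Pick a centre in every star. The row of `H` at a centre is supported on the leaves of its
star, and the row at a leaf on its centre. Cauchy–Schwarz on the centre rows and exact
evaluation of the leaf rows bound `‖H x‖²` by `M² ‖x‖²`, `M` the largest column norm, each
coordinate of `x` being charged exactly once: at its centre if it is a leaf, through the
leaf rows if it is a centre. Unit vectors give the reverse inequality.
-/

open Finset Matrix

structure SimpleGraph.IsStarCenterMap {V : Type*} (G : SimpleGraph V) (f : V → V) : Prop where
  idem : ∀ v, f (f v) = f v
  adj : ∀ ⦃u w⦄, G.Adj u w → f u = f w ∧ (f u = u ∨ f w = w)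

/-- Centres are chosen per connected component, through a representative, so that adjacent
vertices get the same one. -/
theorem IsStarForest.exists_isStarCenterMap {V : Type*} {G : SimpleGraph V}
    (hG : IsStarForest G) : ∃ f : V → V, G.IsStarCenterMap f := by
  choose c hc_reach _ hc_edge using hG
  let r : V → V := fun v => (G.connectedComponentMk v).out
  have hr_reach : ∀ v, G.Reachable v (r v) := fun v =>
    SimpleGraph.ConnectedComponent.exact (Quot.out_eq _).symm
  have hr_congr : ∀ {v w}, G.Reachable v w → r v = r w := fun h =>
    congrArg Quot.out (SimpleGraph.ConnectedComponent.sound h)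
  refine ⟨fun v => c (r v), fun v => ?_, fun u w huw => ?_⟩
  · exact congrArg c (hr_congr ((hr_reach v).trans (hc_reach (r v)))).symm
  · have hfuw : c (r u) = c (r w) := congrArg c (hr_congr huw.reachable)
    refine ⟨hfuw, ?_⟩
    rcases hc_edge (r u) u w huw (hr_reach u).symm with h | h
    · exact Or.inl h.symm
    · exact Or.inr (hfuw ▸ h.symm)

section StarSupported

variable {𝕜 ι : Type*} [RCLike 𝕜]

theorem norm_sum_mul_sq_le (s : Finset ι) (a x : ι → 𝕜) :
    ‖∑ k ∈ s, a k * x k‖ ^ 2 ≤ (∑ k ∈ s, ‖a k‖ ^ 2) * ∑ k ∈ s, ‖x k‖ ^ 2 :=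
  calc ‖∑ k ∈ s, a k * x k‖ ^ 2 ≤ (∑ k ∈ s, ‖a k‖ * ‖x k‖) ^ 2 := by
        gcongr
        exact (norm_sum_le _ _).trans_eq (by simp only [norm_mul])
    _ ≤ _ := sum_mul_sq_le_sq_mul_sq _ _ _

variable [Fintype ι] {G : SimpleGraph ι} {f : ι → ι} {A : Matrix ι ι 𝕜}

theorem SimpleGraph.IsStarCenterMap.mulVec_apply_of_ne (hf : G.IsStarCenterMap f)
    (hA : ∀ i k, A i k ≠ 0 → G.Adj i k) (x : ι → 𝕜) {i : ι} (hi : f i ≠ i) :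
    (A *ᵥ x) i = A i (f i) * x (f i) := by
  refine sum_eq_single (f i) (fun k _ hk => ?_) (by simp)
  by_contra hAx
  obtain ⟨hik, hk'⟩ := hf.adj (hA i k (left_ne_zero_of_mul hAx))
  exact hk (hik.trans (hk'.resolve_left hi)).symm

theorem SimpleGraph.IsStarCenterMap.mulVec_apply_of_eq [DecidableEq ι]
    (hf : G.IsStarCenterMap f) (hA : ∀ i k, A i k ≠ 0 → G.Adj i k) (x : ι → 𝕜) {i : ι}
    (hi : f i = i) :
    (A *ᵥ x) i = ∑ k with f k ≠ k ∧ f k = i, A i k * x k := by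
  refine (sum_subset (subset_univ _) fun k _ hk => ?_).symm
  by_contra hAx
  have hik := hA i k (left_ne_zero_of_mul hAx)
  obtain ⟨hfik, -⟩ := hf.adj hik
  have hki : f k = i := hfik ▸ hi
  exact hk (mem_filter.2 ⟨mem_univ _, fun hkk => hik.ne (hkk.symm.trans hki).symm, hki⟩)

theorem SimpleGraph.IsStarCenterMap.sum_norm_sq_mulVec_le [DecidableEq ι]
    (hf : G.IsStarCenterMap f) (hA : ∀ i k, A i k ≠ 0 → G.Adj i k) {m : ℝ}
    (hrow : ∀ i, ∑ k, ‖A i k‖ ^ 2 ≤ m) (hcol : ∀ k, ∑ i, ‖A i k‖ ^ 2 ≤ m) (x : ι → 𝕜) :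
    ∑ i, ‖(A *ᵥ x) i‖ ^ 2 ≤ m * ∑ i, ‖x i‖ ^ 2 := by
  have hmaps : ∀ i ∈ ({i | ¬f i = i} : Finset ι), f i ∈ ({i | f i = i} : Finset ι) :=
    fun i _ => by simp [hf.idem]
  have hcentres : ∑ i with f i = i, ‖(A *ᵥ x) i‖ ^ 2 ≤ m * ∑ k with ¬f k = k, ‖x k‖ ^ 2 := by
    rw [← sum_fiberwise_of_maps_to hmaps, mul_sum]
    refine sum_le_sum fun i hi => ?_
    rw [hf.mulVec_apply_of_eq hA x (mem_filter.1 hi).2, filter_filter]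
    refine (norm_sum_mul_sq_le _ _ _).trans (mul_le_mul_of_nonneg_right ?_ (by positivity))
    exact (sum_le_univ_sum_of_nonneg fun _ => by positivity).trans (hrow i)
  have hleaves : ∑ i with ¬f i = i, ‖(A *ᵥ x) i‖ ^ 2 ≤ m * ∑ c with f c = c, ‖x c‖ ^ 2 := by
    rw [← sum_fiberwise_of_maps_to hmaps, mul_sum]
    refine sum_le_sum fun c _ => ?_
    calc ∑ i ∈ {i | ¬f i = i} with f i = c, ‖(A *ᵥ x) i‖ ^ 2
        = (∑ i ∈ {i | ¬f i = i} with f i = c, ‖A i c‖ ^ 2) * ‖x c‖ ^ 2 := by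
          rw [sum_mul]
          refine sum_congr rfl fun i hi => ?_
          obtain ⟨hleaf, rfl⟩ := mem_filter.1 hi
          rw [hf.mulVec_apply_of_ne hA x (mem_filter.1 hleaf).2, norm_mul, mul_pow]
      _ ≤ m * ‖x c‖ ^ 2 := by
          gcongr
          exact (sum_le_univ_sum_of_nonneg fun _ => by positivity).trans (hcol c)
  calc ∑ i, ‖(A *ᵥ x) i‖ ^ 2
      = ∑ i with f i = i, ‖(A *ᵥ x) i‖ ^ 2 + ∑ i with ¬f i = i, ‖(A *ᵥ x) i‖ ^ 2 :=
        (sum_filter_add_sum_filter_not _ _ _).symm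
    _ ≤ m * ∑ k with ¬f k = k, ‖x k‖ ^ 2 + m * ∑ c with f c = c, ‖x c‖ ^ 2 :=
        add_le_add hcentres hleaves
    _ = m * ∑ i, ‖x i‖ ^ 2 := by rw [← mul_add, add_comm, sum_filter_add_sum_filter_not]

end StarSupported

theorem matOpNorm_le_of_sum_norm_sq_mulVec_le {N : ℕ} {A : Matrix (Fin N) (Fin N) ℂ} {M : ℝ}
    (hM : 0 ≤ M) (h : ∀ x : Fin N → ℂ, ∑ i, ‖(A *ᵥ x) i‖ ^ 2 ≤ M ^ 2 * ∑ i, ‖x i‖ ^ 2) :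
    matOpNorm A ≤ M := by
  refine ContinuousLinearMap.opNorm_le_bound _ hM fun x => ?_
  rw [LinearMap.coe_toContinuousLinearMap', EuclideanSpace.norm_eq, EuclideanSpace.norm_eq,
    ← Real.sqrt_sq hM, ← Real.sqrt_mul (sq_nonneg M)]
  exact Real.sqrt_le_sqrt (h x.ofLp)

theorem sqrt_sum_norm_sq_le_matOpNorm {N : ℕ} (A : Matrix (Fin N) (Fin N) ℂ) (k : Fin N) :
    √(∑ i, ‖A i k‖ ^ 2) ≤ matOpNorm A := by
  unfold matOpNorm
  simpa [EuclideanSpace.norm_eq, mulVec_single_one] using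
    (LinearMap.toContinuousLinearMap (toEuclideanLin A)).le_opNorm (EuclideanSpace.single k 1)

/-- If `H` is a Hermitian matrix with zero diagonal whose support
graph is a star forest, then the spectral norm of `H` equals its maximum Euclidean
column norm. -/
theorem opNorm_eq_max_column_norm_of_starForest {N : ℕ}
    (H : Matrix (Fin N) (Fin N) ℂ) (hherm : H.IsHermitian)
    (hdiag : ∀ i : Fin N, H i i = 0)
    (hstar : IsStarForest (supportGraph H)) :
    matOpNorm H = ⨆ k : Fin N, Real.sqrt (∑ i : Fin N, ‖H i k‖ ^ 2) := by
  obtain ⟨f, hf⟩ := hstar.exists_isStarCenterMap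
  have hsupp : ∀ i k, H i k ≠ 0 → (supportGraph H).Adj i k := fun i k h =>
    ⟨fun hik => h (hik ▸ hdiag i), Or.inl h⟩
  set M := ⨆ k : Fin N, √(∑ i, ‖H i k‖ ^ 2)
  have hM : 0 ≤ M := Real.iSup_nonneg fun _ => Real.sqrt_nonneg _
  have hcol : ∀ k, ∑ i, ‖H i k‖ ^ 2 ≤ M ^ 2 := fun k =>
    (Real.sqrt_le_iff.1 (le_ciSup (f := fun k => √(∑ i, ‖H i k‖ ^ 2))
      (Set.finite_range _).bddAbove k)).2
  have hrow : ∀ i, ∑ k, ‖H i k‖ ^ 2 ≤ M ^ 2 := fun i =>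
    (sum_congr rfl fun k _ => by rw [← hherm.apply i k, norm_star]).trans_le (hcol i)
  exact le_antisymm
    (matOpNorm_le_of_sum_norm_sq_mulVec_le hM (hf.sum_norm_sq_mulVec_le hsupp hrow hcol))
    (Real.iSup_le (sqrt_sum_norm_sq_le_matOpNorm H) (norm_nonneg _))
end

section
/- Let H and H' be N×N complex matrices such that H' is Hermitian with zero diagonal, the support graph of H' is a star forest (every edge of the support graph has an endpoint of degree exactly 1), and |H'_{ik}| ≤ |H_{ik}| for all i, k. Then the operator norm of H' is bounded by the maximum Euclidean column norm of H: ‖H'‖ ≤ max_k ‖H e_k‖₂. -/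
/-- If `H'` is Hermitian with zero diagonal, its support graph is a
star forest, and `|H'ᵢₖ| ≤ |Hᵢₖ|` entrywise, then the spectral norm of `H'` is at most
the maximum Euclidean column norm of `H`. -/
theorem opNorm_starForest_le_max_column_norm {N : ℕ}
    (H H' : Matrix (Fin N) (Fin N) ℂ) (hherm : H'.IsHermitian)
    (hdiag : ∀ i : Fin N, H' i i = 0)
    (hstar : IsStarForest (supportGraph H'))
    (hle : ∀ i k : Fin N, ‖H' i k‖ ≤ ‖H i k‖) :
    matOpNorm H' ≤ ⨆ k : Fin N, Real.sqrt (∑ i : Fin N, ‖H i k‖ ^ 2) := by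
  set M := ⨆ k : Fin N, Real.sqrt (∑ i : Fin N, ‖H i k‖ ^ 2) with hMdef
  have hM0 : 0 ≤ M := by
    rcases isEmpty_or_nonempty (Fin N) with h | h
    · simp [hMdef, Real.iSup_of_isEmpty]
    · obtain ⟨k⟩ := h
      exact le_trans (Real.sqrt_nonneg _)
        (le_ciSup (f := fun k : Fin N => Real.sqrt (∑ i : Fin N, ‖H i k‖ ^ 2)) (Set.Finite.bddAbove (Set.finite_range _)) k)
  have hcol : ∀ k, ∑ i, ‖H' i k‖ ^ 2 ≤ M ^ 2 := by
    intro k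
    have h2 : Real.sqrt (∑ i, ‖H i k‖ ^ 2) ≤ M :=
      le_ciSup (f := fun k : Fin N => Real.sqrt (∑ i : Fin N, ‖H i k‖ ^ 2))
        (Set.Finite.bddAbove (Set.finite_range _)) k
    calc ∑ i, ‖H' i k‖ ^ 2 ≤ ∑ i, ‖H i k‖ ^ 2 :=
          Finset.sum_le_sum fun i _ => pow_le_pow_left₀ (norm_nonneg _) (hle i k) 2
      _ = Real.sqrt (∑ i, ‖H i k‖ ^ 2) ^ 2 := (Real.sq_sqrt (by positivity)).symm
      _ ≤ M ^ 2 := pow_le_pow_left₀ (Real.sqrt_nonneg _) h2 2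
  have hne : ∀ {i j : Fin N}, H' i j ≠ 0 → i ≠ j := by
    intro i j h hij
    exact h (hij ▸ hdiag i)
  have hadj : ∀ {i j : Fin N}, H' i j ≠ 0 → (supportGraph H').Adj i j := by
    intro i j h
    exact ⟨hne h, Or.inl h⟩
  have hkey : ∀ k, ∑ i ∈ Finset.univ.filter (fun i => H' i k ≠ 0), (∑ j, ‖H' i j‖ ^ 2)
      ≤ M ^ 2 := by
    intro k
    obtain ⟨c, -, -, hedge⟩ := hstar k
    by_cases hkc : k = c
    · subst hkc
      have hrow : ∀ i ∈ Finset.univ.filter (fun i => H' i k ≠ 0),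
          ∑ j, ‖H' i j‖ ^ 2 = ‖H' i k‖ ^ 2 := by
        intro i hi
        simp only [Finset.mem_filter] at hi
        have hik := hi.2
        refine Finset.sum_eq_single k (fun j _ hjk => ?_) (by simp)
        by_cases h0 : H' i j = 0
        · simp [h0]
        · rcases hedge i j (hadj h0) ((hadj hik).symm.reachable) with h | h
          · exact absurd h (hne hik)
          · exact absurd h hjk
      calc ∑ i ∈ Finset.univ.filter (fun i => H' i k ≠ 0), (∑ j, ‖H' i j‖ ^ 2)
          = ∑ i ∈ Finset.univ.filter (fun i => H' i k ≠ 0), ‖H' i k‖ ^ 2 :=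
            Finset.sum_congr rfl hrow
        _ ≤ ∑ i, ‖H' i k‖ ^ 2 := Finset.sum_le_sum_of_subset_of_nonneg
            (Finset.filter_subset _ _) (fun i _ _ => by positivity)
        _ ≤ M ^ 2 := hcol k
    · have hsub : Finset.univ.filter (fun i => H' i k ≠ 0) ⊆ {c} := by
        intro i hi
        simp only [Finset.mem_filter] at hi
        rcases hedge i k (hadj hi.2) ((hadj hi.2).symm.reachable) with h | h
        · simp [h]
        · exact absurd h hkc
      calc ∑ i ∈ Finset.univ.filter (fun i => H' i k ≠ 0), (∑ j, ‖H' i j‖ ^ 2)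
          ≤ ∑ i ∈ ({c} : Finset (Fin N)), (∑ j, ‖H' i j‖ ^ 2) :=
            Finset.sum_le_sum_of_subset_of_nonneg hsub (fun i _ _ => by positivity)
        _ = ∑ j, ‖H' c j‖ ^ 2 := Finset.sum_singleton _ _
        _ = ∑ j, ‖H' j c‖ ^ 2 := by
            refine Finset.sum_congr rfl fun j _ => ?_
            rw [← hherm.apply j c, norm_star]
        _ ≤ M ^ 2 := hcol c
  rw [matOpNorm]
  refine ContinuousLinearMap.opNorm_le_bound _ hM0 fun x => ?_
  set T := LinearMap.toContinuousLinearMap (Matrix.toEuclideanLin H') with hT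
  have hTx : ∀ i, T x i = ∑ j, H' i j * x j := by
    intro i
    simp [hT, Matrix.toEuclideanLin_apply, Matrix.mulVec, dotProduct]
  have hstep1 : ∀ i, ‖T x i‖ ^ 2 ≤
      ∑ j ∈ Finset.univ.filter (fun j => H' i j ≠ 0), (∑ l, ‖H' i l‖ ^ 2) * ‖x j‖ ^ 2 := by
    intro i
    have h1 : T x i = ∑ j ∈ Finset.univ.filter (fun j => H' i j ≠ 0), H' i j * x j := by
      rw [hTx i]
      refine (Finset.sum_filter_of_ne fun j _ hj => ?_).symm
      intro h0
      exact hj (by simp [h0])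
    have h2 : ‖T x i‖ ≤ ∑ j ∈ Finset.univ.filter (fun j => H' i j ≠ 0), ‖H' i j‖ * ‖x j‖ := by
      rw [h1]
      exact (norm_sum_le _ _).trans (le_of_eq (Finset.sum_congr rfl fun j _ => norm_mul _ _))
    calc ‖T x i‖ ^ 2 ≤ (∑ j ∈ Finset.univ.filter (fun j => H' i j ≠ 0), ‖H' i j‖ * ‖x j‖) ^ 2 :=
          pow_le_pow_left₀ (norm_nonneg _) h2 2
      _ ≤ (∑ j ∈ Finset.univ.filter (fun j => H' i j ≠ 0), ‖H' i j‖ ^ 2) *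
            ∑ j ∈ Finset.univ.filter (fun j => H' i j ≠ 0), ‖x j‖ ^ 2 :=
          Finset.sum_mul_sq_le_sq_mul_sq _ _ _
      _ ≤ (∑ l, ‖H' i l‖ ^ 2) * ∑ j ∈ Finset.univ.filter (fun j => H' i j ≠ 0), ‖x j‖ ^ 2 := by
          refine mul_le_mul_of_nonneg_right (Finset.sum_le_sum_of_subset_of_nonneg
            (Finset.filter_subset _ _) (fun l _ _ => by positivity)) ?_
          positivity
      _ = ∑ j ∈ Finset.univ.filter (fun j => H' i j ≠ 0), (∑ l, ‖H' i l‖ ^ 2) * ‖x j‖ ^ 2 :=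
          Finset.mul_sum _ _ _
  have hsum : ∑ i, ‖T x i‖ ^ 2 ≤ M ^ 2 * ∑ j, ‖x j‖ ^ 2 := by
    calc ∑ i, ‖T x i‖ ^ 2
        ≤ ∑ i, ∑ j ∈ Finset.univ.filter (fun j => H' i j ≠ 0),
            (∑ l, ‖H' i l‖ ^ 2) * ‖x j‖ ^ 2 := Finset.sum_le_sum fun i _ => hstep1 i
      _ = ∑ i, ∑ j, if H' i j ≠ 0 then (∑ l, ‖H' i l‖ ^ 2) * ‖x j‖ ^ 2 else 0 := by
          refine Finset.sum_congr rfl fun i _ => ?_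
          rw [Finset.sum_filter]
      _ = ∑ j, ∑ i, if H' i j ≠ 0 then (∑ l, ‖H' i l‖ ^ 2) * ‖x j‖ ^ 2 else 0 :=
          Finset.sum_comm
      _ = ∑ j, (∑ i ∈ Finset.univ.filter (fun i => H' i j ≠ 0), (∑ l, ‖H' i l‖ ^ 2)) *
            ‖x j‖ ^ 2 := by
          refine Finset.sum_congr rfl fun j _ => ?_
          rw [Finset.sum_mul, Finset.sum_filter]
      _ ≤ ∑ j, M ^ 2 * ‖x j‖ ^ 2 :=
          Finset.sum_le_sum fun j _ =>
            mul_le_mul_of_nonneg_right (hkey j) (by positivity)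
      _ = M ^ 2 * ∑ j, ‖x j‖ ^ 2 := (Finset.mul_sum _ _ _).symm
  have hxn : ‖x‖ = Real.sqrt (∑ j, ‖x j‖ ^ 2) := EuclideanSpace.norm_eq x
  have hTn : ‖T x‖ = Real.sqrt (∑ i, ‖T x i‖ ^ 2) := EuclideanSpace.norm_eq (T x)
  rw [hTn]
  have hfinal : ∑ i, ‖T x i‖ ^ 2 ≤ (M * ‖x‖) ^ 2 := by
    rw [mul_pow, hxn, Real.sq_sqrt (Finset.sum_nonneg fun j _ => sq_nonneg _)]
    exact hsum
  calc Real.sqrt (∑ i, ‖T x i‖ ^ 2) ≤ Real.sqrt ((M * ‖x‖) ^ 2) :=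
        Real.sqrt_le_sqrt hfinal
    _ = M * ‖x‖ := Real.sqrt_sq (mul_nonneg hM0 (norm_nonneg x))
end
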